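/- arXiv:1410.6328 — 4 statements merged into one kernel-verified Lean document; each statement's English description precedes it below -/
import Mathlib

section
/- Let (I_a)_{a∈A} be finitely many mutually independent Bernoulli indicator variables with X = Σ_a I_a and λ = E(X). If each P(I_a=1) ≤ ε with λε ≤ δ, then for every fixed k, |P(X=k) − e^{−λ} λ^k / k!| is bounded by an explicit error term tending to 0 as ε, δ, and (Σ_a P(I_a=1)²)/λ² tend to 0. -/
/-!
Write `P(X = k) = ∑_{|S| = k} ∏_{a ∈ S} p a · ∏_{a ∉ S} (1 - p a)`, `λ = ∑ p a` and `e_k` for the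
`k`-th elementary symmetric polynomial of the `p a`. Each factor `∏_{a ∉ S} (1 - p a)` lies between
`e^{-(1+ε)λ}` (from `1 - x ≥ e^{-x(1+x)}`, valid as long as `x(1+x) ≤ 1`, i.e. `x ≤ (√5-1)/2`) and
`e^{-λ} + ∑_{a ∈ S} p a`, so `P(X = k)` is within `δ λ^k/k! + λ^{k-2} ∑ p a²` of `e^{-λ} e_k`.
Finally `e_k` is compared with `λ^k/k!` through the identity `(k+1) e_{k+1} = ∑_a p a · e_k(A ∖ {a})`,
which gives both `e_k ≤ λ^k/k!` and `λ^k/k! - e_k ≤ λ^{k-2} ∑ p a²`.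
-/

open Finset Real Nat

theorem Multiset.esymm_cons_succ {R : Type*} [CommSemiring R] (a : R) (m : Multiset R) (k : ℕ) :
    (a ::ₘ m).esymm (k + 1) = m.esymm (k + 1) + a * m.esymm k := by
  simp [Multiset.esymm, Multiset.powersetCard_cons, Multiset.map_map, Multiset.sum_map_mul_left]

namespace Finset

variable {ι : Type*}

section CommSemiring

variable {R : Type*} [CommSemiring R] (p : ι → R)

theorem esymm_map_val_one (s : Finset ι) : (s.val.map p).esymm 1 = ∑ a ∈ s, p a := by
  simp [esymm_map_val, powersetCard_one]

variable [DecidableEq ι]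

theorem esymm_map_val_succ_of_mem {s : Finset ι} {a : ι} (ha : a ∈ s) (k : ℕ) :
    (s.val.map p).esymm (k + 1) =
      ((s.erase a).val.map p).esymm (k + 1) + p a * ((s.erase a).val.map p).esymm k := by
  rw [← Multiset.esymm_cons_succ, ← Multiset.map_cons, erase_val, Multiset.cons_erase ha]

theorem sum_filter_mem_powersetCard_succ {M : Type*} [AddCommMonoid M] (g : Finset ι → M)
    {s : Finset ι} {a : ι} (ha : a ∈ s) (k : ℕ) :
    ∑ t ∈ (s.powersetCard (k + 1)).filter (a ∈ ·), g t =
      ∑ u ∈ (s.erase a).powersetCard k, g (insert a u) := by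
  refine sum_nbij' (·.erase a) (insert a) ?_ ?_ ?_ ?_ ?_ <;> intro x hx <;>
    simp only [mem_filter, mem_powersetCard] at hx ⊢
  all_goals grind [insert_erase, erase_insert]

theorem sum_powersetCard_succ_prod_mul_sum (f : ι → R) (s : Finset ι) (k : ℕ) :
    ∑ t ∈ s.powersetCard (k + 1), (∏ a ∈ t, p a) * ∑ a ∈ t, f a =
      ∑ a ∈ s, f a * p a * ((s.erase a).val.map p).esymm k := by
  calc ∑ t ∈ s.powersetCard (k + 1), (∏ a ∈ t, p a) * ∑ a ∈ t, f a
      = ∑ t ∈ s.powersetCard (k + 1), ∑ a ∈ t, f a * ∏ b ∈ t, p b := by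
        simp only [mul_sum, mul_comm]
    _ = ∑ a ∈ s, ∑ t ∈ (s.powersetCard (k + 1)).filter (a ∈ ·), f a * ∏ b ∈ t, p b :=
        sum_comm' fun t a => by
          simp only [mem_powersetCard, mem_filter]
          exact ⟨fun ⟨h, ha⟩ => ⟨⟨h, ha⟩, h.1 ha⟩, fun ⟨h, _⟩ => h⟩
    _ = ∑ a ∈ s, ∑ u ∈ (s.erase a).powersetCard k, f a * ∏ b ∈ insert a u, p b :=
        sum_congr rfl fun a ha => sum_filter_mem_powersetCard_succ _ ha k
    _ = ∑ a ∈ s, f a * p a * ((s.erase a).val.map p).esymm k := by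
        refine sum_congr rfl fun a _ => ?_
        rw [esymm_map_val, mul_sum]
        refine sum_congr rfl fun u hu => ?_
        have hau : a ∉ u := fun h => by simpa using (mem_powersetCard.1 hu).1 h
        rw [prod_insert hau, mul_assoc]

theorem succ_mul_esymm_map_val (s : Finset ι) (k : ℕ) :
    (k + 1) * (s.val.map p).esymm (k + 1) = ∑ a ∈ s, p a * ((s.erase a).val.map p).esymm k := by
  have h := sum_powersetCard_succ_prod_mul_sum p 1 s k
  simp only [Pi.one_apply, sum_const, nsmul_eq_mul, mul_one, one_mul] at h
  rw [esymm_map_val, mul_sum, ← h]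
  refine sum_congr rfl fun t ht => ?_
  rw [(mem_powersetCard.1 ht).2]
  push_cast
  ring

end CommSemiring

section LinearOrderedField

variable {𝕜 : Type*} [Field 𝕜] [LinearOrder 𝕜] [IsStrictOrderedRing 𝕜] {p : ι → 𝕜}

theorem esymm_map_val_nonneg (hp : ∀ a, 0 ≤ p a) (s : Finset ι) (k : ℕ) :
    0 ≤ (s.val.map p).esymm k := by
  rw [esymm_map_val]
  exact sum_nonneg fun t _ => prod_nonneg fun a _ => hp a

theorem esymm_map_val_mono (hp : ∀ a, 0 ≤ p a) {s t : Finset ι} (h : t ⊆ s) (k : ℕ) :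
    (t.val.map p).esymm k ≤ (s.val.map p).esymm k := by
  rw [esymm_map_val, esymm_map_val]
  exact sum_le_sum_of_subset_of_nonneg (powersetCard_mono h) fun u _ _ =>
    prod_nonneg fun a _ => hp a

variable [DecidableEq ι]

theorem esymm_map_val_le_pow_div_factorial (hp : ∀ a, 0 ≤ p a) (s : Finset ι) (k : ℕ) :
    (s.val.map p).esymm k ≤ (∑ a ∈ s, p a) ^ k / k ! := by
  induction k with
  | zero => simp [Multiset.esymm]
  | succ k ih =>
    have key : (k + 1 : 𝕜) * (s.val.map p).esymm (k + 1) ≤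
        (∑ a ∈ s, p a) * ((∑ a ∈ s, p a) ^ k / k !) := by
      rw [succ_mul_esymm_map_val, sum_mul]
      gcongr with a ha
      · exact hp a
      · exact (esymm_map_val_mono hp (erase_subset a s) k).trans ih
    calc (s.val.map p).esymm (k + 1) = (k + 1 : 𝕜) * (s.val.map p).esymm (k + 1) / (k + 1) := by
          field_simp
      _ ≤ (∑ a ∈ s, p a) * ((∑ a ∈ s, p a) ^ k / k !) / (k + 1) := by gcongr
      _ = (∑ a ∈ s, p a) ^ (k + 1) / (k + 1)! := by
          rw [factorial_succ]
          push_cast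
          field_simp
          ring

theorem sum_mul_esymm_map_val_sub_le (hp : ∀ a, 0 ≤ p a) (s : Finset ι) (k : ℕ) :
    (∑ a ∈ s, p a) * (s.val.map p).esymm (k + 1) - (∑ a ∈ s, p a ^ 2) * (s.val.map p).esymm k ≤
      (k + 2) * (s.val.map p).esymm (k + 2) := by
  calc (∑ a ∈ s, p a) * (s.val.map p).esymm (k + 1) - (∑ a ∈ s, p a ^ 2) * (s.val.map p).esymm k
      = ∑ a ∈ s, p a * ((s.val.map p).esymm (k + 1) - p a * (s.val.map p).esymm k) := by
        simp only [sum_mul, ← sum_sub_distrib]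
        exact sum_congr rfl fun a _ => by ring
    _ ≤ ∑ a ∈ s, p a * ((s.erase a).val.map p).esymm (k + 1) := by
        gcongr with a ha
        · exact hp a
        · have := esymm_map_val_mono hp (erase_subset a s) k
          rw [esymm_map_val_succ_of_mem p ha k]
          nlinarith [hp a]
    _ = (k + 2) * (s.val.map p).esymm (k + 2) := by
        rw [← succ_mul_esymm_map_val]
        push_cast
        ring

theorem sum_powersetCard_prod_mul_sum_le (hp : ∀ a, 0 ≤ p a) (s : Finset ι) :
    ∀ k : ℕ, ∑ t ∈ s.powersetCard k, (∏ a ∈ t, p a) * ∑ a ∈ t, p a ≤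
      (∑ a ∈ s, p a ^ 2) * ((∑ a ∈ s, p a) ^ (k - 1) / (k - 1)!)
  | 0 => by simpa using sum_nonneg fun a _ => sq_nonneg (p a)
  | k + 1 => by
    rw [sum_powersetCard_succ_prod_mul_sum, Nat.add_sub_cancel, sum_mul]
    refine sum_le_sum fun a _ => ?_
    rw [← sq]
    exact mul_le_mul_of_nonneg_left
      ((esymm_map_val_mono hp (erase_subset a s) k).trans (esymm_map_val_le_pow_div_factorial hp s k))
      (sq_nonneg _)

theorem pow_div_factorial_sub_esymm_map_val_le (hp : ∀ a, 0 ≤ p a) (s : Finset ι) :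
    ∀ k : ℕ, (∑ a ∈ s, p a) ^ k / (k ! : 𝕜) - (s.val.map p).esymm k ≤
      (∑ a ∈ s, p a) ^ (k - 2) * ∑ a ∈ s, p a ^ 2
  | 0 => by
    simpa [Multiset.esymm] using sum_nonneg fun a _ => sq_nonneg (p a)
  | 1 => by
    simpa [esymm_map_val_one] using sum_nonneg fun a _ => sq_nonneg (p a)
  | n + 2 => by
    set L := ∑ a ∈ s, p a
    set T := ∑ a ∈ s, p a ^ 2
    have hL : 0 ≤ L := sum_nonneg fun a _ => hp a
    have hT : 0 ≤ T := sum_nonneg fun a _ => sq_nonneg (p a)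
    have hstep : (n + 2 : 𝕜) * (L ^ (n + 2) / (n + 2)! - (s.val.map p).esymm (n + 2)) ≤
        L * (L ^ (n + 1) / (n + 1)! - (s.val.map p).esymm (n + 1)) + T * (s.val.map p).esymm n := by
      have hfac : (n + 2 : 𝕜) * (L ^ (n + 2) / (n + 2)!) = L * (L ^ (n + 1) / (n + 1)!) := by
        rw [factorial_succ (n + 1)]
        push_cast
        field_simp
        ring
      linarith [sum_mul_esymm_map_val_sub_le hp s n]
    have hprev : L * (L ^ (n + 1) / (n + 1)! - (s.val.map p).esymm (n + 1)) ≤ L ^ n * T := by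
      cases n with
      | zero => simpa [esymm_map_val_one, L] using hT
      | succ m =>
        have ih := pow_div_factorial_sub_esymm_map_val_le hp s (m + 2)
        rw [Nat.add_sub_cancel] at ih
        calc _ ≤ L * (L ^ m * T) := mul_le_mul_of_nonneg_left ih hL
          _ = L ^ (m + 1) * T := by ring
    have hlast : T * (s.val.map p).esymm n ≤ L ^ n * T := by
      rw [mul_comm]
      refine mul_le_mul_of_nonneg_right ((esymm_map_val_le_pow_div_factorial hp s n).trans ?_) hT
      exact div_le_self (pow_nonneg hL n) (mod_cast n.factorial_pos)
    have hLT : 0 ≤ L ^ n * T := by positivity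
    simp only [Nat.add_sub_cancel]
    nlinarith

end LinearOrderedField

end Finset

theorem pow_pred_div_factorial_le {𝕜 : Type*} [Field 𝕜] [LinearOrder 𝕜] [IsStrictOrderedRing 𝕜]
    {x : 𝕜} (hx : 0 ≤ x) : ∀ k : ℕ, x ^ (k - 1) / (k - 1)! ≤ x ^ k / k ! + x ^ (k - 2)
  | 0 => by norm_num
  | 1 => by simpa using hx
  | n + 2 => by
    set F : 𝕜 := ((n + 1)! : 𝕜)
    have hF : 0 < F := by positivity
    have hsq : ((n : 𝕜) + 2) ^ 2 ≤ 4 * ((n + 2) * F) := by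
      have hF1 : ((n + 1 : ℕ) : 𝕜) ≤ F := Nat.cast_le.2 (self_le_factorial _)
      push_cast at hF1
      nlinarith
    have hdiff : x ^ (n + 2) / (n + 2)! + x ^ n - x ^ (n + 1) / (n + 1)! =
        x ^ n * ((x - (n + 2) / 2) ^ 2 + ((n + 2) * F - (n + 2) ^ 2 / 4)) / ((n + 2) * F) := by
      rw [factorial_succ (n + 1)]
      push_cast
      field_simp
      ring
    show x ^ (n + 1) / ((n + 1)! : 𝕜) ≤ x ^ (n + 2) / ((n + 2)! : 𝕜) + x ^ n
    have : 0 ≤ x ^ n * ((x - (n + 2) / 2) ^ 2 + ((n + 2) * F - (n + 2) ^ 2 / 4)) / ((n + 2) * F) := by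
      apply div_nonneg _ (by positivity)
      exact mul_nonneg (pow_nonneg hx n) (by nlinarith [sq_nonneg (x - (n + 2) / 2)])
    linarith

namespace Real

theorem exp_neg_mul_one_add_le_one_sub {x : ℝ} (hx : 0 ≤ x) (h : x * (1 + x) ≤ 1) :
    exp (-(x * (1 + x))) ≤ 1 - x := by
  set t := x * (1 + x)
  have htaylor : 1 + t + t ^ 2 / 2 + t ^ 3 / 6 ≤ exp t := by
    simpa [sum_range_succ, Nat.factorial] using sum_le_exp_of_nonneg (by positivity : 0 ≤ t) 4
  have hpoly : 1 ≤ (1 - x) * (1 + t + t ^ 2 / 2 + t ^ 3 / 6) := by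
    nlinarith [mul_nonneg hx hx, mul_nonneg (mul_nonneg hx hx) hx, mul_nonneg hx (sub_nonneg.2 h),
      mul_nonneg (mul_nonneg hx hx) (sub_nonneg.2 h), pow_nonneg hx 4, pow_nonneg hx 5]
  have h1x : 0 ≤ 1 - x := by nlinarith
  calc exp (-t) ≤ exp (-t) * ((1 - x) * exp t) :=
        le_mul_of_one_le_right (exp_pos _).le (hpoly.trans (mul_le_mul_of_nonneg_left htaylor h1x))
    _ = 1 - x := by rw [mul_left_comm, ← exp_add, neg_add_cancel, exp_zero, mul_one]

theorem exp_neg_sub_le_exp_neg_add {L u : ℝ} (hu : 0 ≤ u) (huL : u ≤ L) :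
    exp (-(L - u)) ≤ exp (-L) + u := by
  have h1 : exp (u - L) * (1 - u) ≤ exp (-L) := by
    calc exp (u - L) * (1 - u) ≤ exp (u - L) * exp (-u) :=
          mul_le_mul_of_nonneg_left (one_sub_le_exp_neg u) (exp_pos _).le
      _ = exp (-L) := by rw [← exp_add]; ring_nf
  have h2 : exp (u - L) ≤ 1 := exp_le_one_iff.2 (by linarith)
  rw [neg_sub]
  nlinarith

end Real

namespace Finset

variable {ι : Type*} {p : ι → ℝ}

theorem prod_one_sub_le_exp_neg_sum (s : Finset ι) (hp : ∀ a ∈ s, p a ≤ 1) :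
    ∏ a ∈ s, (1 - p a) ≤ exp (-∑ a ∈ s, p a) := by
  rw [← sum_neg_distrib, exp_sum]
  exact prod_le_prod (fun a ha => sub_nonneg.2 (hp a ha)) fun a _ => one_sub_le_exp_neg _

theorem exp_neg_mul_sum_le_prod_one_sub (s : Finset ι) {c : ℝ} (hp0 : ∀ a ∈ s, 0 ≤ p a)
    (hpc : ∀ a ∈ s, p a ≤ c) (hp1 : ∀ a ∈ s, p a * (1 + p a) ≤ 1) :
    exp (-((1 + c) * ∑ a ∈ s, p a)) ≤ ∏ a ∈ s, (1 - p a) := by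
  rw [mul_sum, ← sum_neg_distrib, exp_sum]
  refine prod_le_prod (fun a _ => (exp_pos _).le) fun a ha => ?_
  refine (exp_le_exp.2 ?_).trans (exp_neg_mul_one_add_le_one_sub (hp0 a ha) (hp1 a ha))
  nlinarith [hp0 a ha, hpc a ha]

end Finset

/-- `P(X = k)` for `X` the sum of independent Bernoulli indicators with `P(I_a = 1) = p a`. -/
noncomputable def poissonBinomial {A : Type*} [Fintype A] [DecidableEq A] (p : A → ℝ) (k : ℕ) : ℝ :=
  ∑ s ∈ powersetCard k univ, (∏ a ∈ s, p a) * ∏ a ∈ sᶜ, (1 - p a)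

section PoissonBinomial

variable {A : Type*} [Fintype A] [DecidableEq A] {p : A → ℝ}

theorem esymm_mul_exp_le_poissonBinomial {c : ℝ} (hp0 : ∀ a, 0 ≤ p a) (hpc : ∀ a, p a ≤ c)
    (hp1 : ∀ a, p a * (1 + p a) ≤ 1) (k : ℕ) :
    (univ.val.map p).esymm k * exp (-((1 + c) * ∑ a, p a)) ≤ poissonBinomial p k := by
  rw [esymm_map_val, sum_mul, poissonBinomial]
  refine sum_le_sum fun s _ => mul_le_mul_of_nonneg_left ?_ (prod_nonneg fun a _ => hp0 a)
  refine (exp_neg_mul_sum_le_prod_one_sub univ (fun a _ => hp0 a) (fun a _ => hpc a)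
    (fun a _ => hp1 a)).trans ?_
  refine prod_le_prod_of_subset_of_le_one (subset_univ _) (fun a _ => ?_) fun a _ _ => ?_
  · nlinarith [hp0 a, hp1 a]
  · linarith [hp0 a]

theorem poissonBinomial_le (hp0 : ∀ a, 0 ≤ p a) (hp1 : ∀ a, p a ≤ 1) (k : ℕ) :
    poissonBinomial p k ≤ exp (-∑ a, p a) * (univ.val.map p).esymm k +
      ∑ s ∈ powersetCard k univ, (∏ a ∈ s, p a) * ∑ a ∈ s, p a := by
  rw [esymm_map_val, mul_sum, ← sum_add_distrib, poissonBinomial]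
  refine sum_le_sum fun s _ => ?_
  rw [mul_comm (exp _), ← mul_add]
  refine mul_le_mul_of_nonneg_left ?_ (prod_nonneg fun a _ => hp0 a)
  calc ∏ a ∈ sᶜ, (1 - p a) ≤ exp (-∑ a ∈ sᶜ, p a) := prod_one_sub_le_exp_neg_sum _ fun a _ => hp1 a
    _ = exp (-((∑ a, p a) - ∑ a ∈ s, p a)) := by rw [← sum_compl_add_sum s p, add_sub_cancel_right]
    _ ≤ exp (-∑ a, p a) + ∑ a ∈ s, p a :=
        exp_neg_sub_le_exp_neg_add (sum_nonneg fun a _ => hp0 a)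
          (sum_le_sum_of_subset_of_nonneg (subset_univ s) fun a _ _ => hp0 a)

end PoissonBinomial

/-- Quantitative Poisson approximation for a sum `X = Σ_a I_a` of finitely many
mutually independent Bernoulli indicators with `P(I_a = 1) = p a ≤ ε` and
`λ = Σ_a p a` with `λ·ε ≤ δ`.  The probability `P(X = k)` (written out
combinatorially, using independence) differs from `e^{−λ} λ^k / k!` by at most
`(λ^k/k!)·δ + λ^{k−2}·Σ_a p_a²`, an explicit error term tending to `0` as
`ε`, `δ` and `(Σ_a p_a²)/λ²` tend to `0`. -/
theorem poisson_approx {A : Type*} [Fintype A] [DecidableEq A]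
    (p : A → ℝ) (ε δ : ℝ) (k : ℕ)
    (hp0 : ∀ a, 0 ≤ p a) (hpε : ∀ a, p a ≤ ε)
    (hε : ε ≤ (Real.sqrt 5 - 1) / 2)
    (hδ : (∑ a, p a) * ε ≤ δ) :
    |(∑ s ∈ Finset.powersetCard k (Finset.univ : Finset A),
        (∏ a ∈ s, p a) * ∏ a ∈ sᶜ, (1 - p a))
      - Real.exp (-(∑ a, p a)) * (∑ a, p a) ^ k / (k.factorial : ℝ)|
    ≤ (∑ a, p a) ^ k / (k.factorial : ℝ) * δ
      + (∑ a, p a) ^ (k - 2) * ∑ a, (p a) ^ 2 := by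
  have hp1 : ∀ a, p a * (1 + p a) ≤ 1 := fun a => by
    nlinarith [hp0 a, hpε a, sq_sqrt (show (0 : ℝ) ≤ 5 by norm_num), sqrt_nonneg 5]
  have hlow := esymm_mul_exp_le_poissonBinomial hp0 hpε hp1 k
  have hup := poissonBinomial_le hp0 (fun a => by nlinarith [hp0 a, hp1 a]) k
  rw [poissonBinomial] at hlow hup
  set L := ∑ a, p a
  set T := ∑ a, p a ^ 2
  set e := (univ.val.map p).esymm k
  set K := L ^ k / (k ! : ℝ)
  have hL : 0 ≤ L := sum_nonneg fun a _ => hp0 a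
  have hTL : T ≤ ε * L := by
    rw [mul_sum]
    exact sum_le_sum fun a _ => by nlinarith [hp0 a, hpε a]
  have hT : 0 ≤ T := sum_nonneg fun a _ => sq_nonneg (p a)
  have he0 : 0 ≤ e := esymm_map_val_nonneg hp0 univ k
  have he : e ≤ K := esymm_map_val_le_pow_div_factorial hp0 univ k
  have hD : K - e ≤ L ^ (k - 2) * T := pow_div_factorial_sub_esymm_map_val_le hp0 univ k
  have hsum := sum_powersetCard_prod_mul_sum_le hp0 univ k
  have hpow := pow_pred_div_factorial_le hL k
  have hexp : exp (-L) * (1 - ε * L) ≤ exp (-((1 + ε) * L)) := by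
    rw [show -((1 + ε) * L) = -L + -(ε * L) by ring, exp_add]
    exact mul_le_mul_of_nonneg_left (by linarith [add_one_le_exp (-(ε * L))]) (exp_pos _).le
  have hexp1 : exp (-L) ≤ 1 := exp_le_one_iff.2 (neg_nonpos.2 hL)
  rw [mul_div_assoc, abs_sub_le_iff]
  constructor
  · nlinarith [mul_le_mul_of_nonneg_left hpow hT, exp_pos (-L)]
  · nlinarith [mul_le_mul_of_nonneg_left hexp he0, mul_le_of_le_one_left (sub_nonneg.2 he) hexp1,
      mul_le_mul (mul_le_of_le_one_left he0 hexp1 |>.trans he) hδ (by linarith) (he0.trans he)]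
end

section
/- Let H₁ and H₂ be simple graphs. If there exists a surjective graph homomorphism φ: V(H₁)→V(H₂) whose induced edge map ĝ(e)={φ(u),φ(v)} for e={u,v} is injective on E(H₁), then B_{H₁} ≥ B_{H₂}, where B_H = Σ_{h:V(H)→{0,1}} ∏_{{u,v}∈E(H)} P_{h(u),h(v)}. -/
open Finset

/-- The entry of the 2×2 matrix `P`: `P_{1,1}=α`, `P_{1,0}=P_{0,1}=β`, `P_{0,0}=γ`. -/
def Pm (α β γ : ℝ) : Bool → Bool → ℝ
  | true, true => α
  | true, false => β
  | false, true => β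
  | false, false => γ

lemma Pm_symm (α β γ : ℝ) (a b : Bool) : Pm α β γ a b = Pm α β γ b a := by
  cases a <;> cases b <;> rfl

/-- The base value `B_G = Σ_{g:V(G)→{0,1}} ∏_{{u,v}∈E(G)} P_{g(u),g(v)}`. -/
noncomputable def baseVal {V : Type*} [Fintype V] [DecidableEq V]
    (α β γ : ℝ) (G : SimpleGraph V) [DecidableRel G.Adj] : ℝ :=
  ∑ g : V → Bool, ∏ e ∈ G.edgeFinset,
    Sym2.lift ⟨fun u v => Pm α β γ (g u) (g v),
      fun u v => Pm_symm α β γ (g u) (g v)⟩ e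

lemma Pm_pos {α β γ : ℝ} (hα : 0 < α) (hβ : 0 < β) (hγ : 0 < γ) (a b : Bool) :
    0 < Pm α β γ a b := by cases a <;> cases b <;> assumption

lemma Pm_le_one {α β γ : ℝ} (hα : α ≤ 1) (hβ : β ≤ 1) (hγ : γ ≤ 1) (a b : Bool) :
    Pm α β γ a b ≤ 1 := by cases a <;> cases b <;> assumption

/-- If there is a surjective graph homomorphism `φ : H₁ → H₂` whose induced edge
map is injective on the edges of `H₁`, then `B_{H₁} ≥ B_{H₂}`. -/
theorem baseVal_le_of_hom {V₁ V₂ : Type*} [Fintype V₁] [DecidableEq V₁]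
    [Fintype V₂] [DecidableEq V₂]
    (H₁ : SimpleGraph V₁) [DecidableRel H₁.Adj]
    (H₂ : SimpleGraph V₂) [DecidableRel H₂.Adj]
    (α β γ : ℝ) (hα0 : 0 < α) (hα1 : α < 1) (hβ0 : 0 < β) (hβ1 : β < 1)
    (hγ0 : 0 < γ) (hγ1 : γ < 1)
    (φ : H₁ →g H₂) (hsurj : Function.Surjective φ)
    (hinj : Set.InjOn (Sym2.map φ) H₁.edgeSet) :
    baseVal α β γ H₂ ≤ baseVal α β γ H₁ := by
  classical
  set F : (V₂ → Bool) → Sym2 V₂ → ℝ := fun g =>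
    Sym2.lift ⟨fun u v => Pm α β γ (g u) (g v),
      fun u v => Pm_symm α β γ (g u) (g v)⟩ with hF
  -- pointwise lemmas about F
  have hFpos : ∀ (g : V₂ → Bool) (e : Sym2 V₂), 0 < F g e := by
    intro g e
    induction e using Sym2.ind with
    | _ u v => exact Pm_pos hα0 hβ0 hγ0 _ _
  have hFle1 : ∀ (g : V₂ → Bool) (e : Sym2 V₂), F g e ≤ 1 := by
    intro g e
    induction e using Sym2.ind with
    | _ u v => exact Pm_le_one hα1.le hβ1.le hγ1.le _ _
  -- Step 1: for each g, term₂ g ≤ term₁ (g ∘ φ)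
  have key : ∀ g : V₂ → Bool,
      (∏ e ∈ H₂.edgeFinset, F g e) ≤
      ∏ e ∈ H₁.edgeFinset,
        Sym2.lift ⟨fun u v => Pm α β γ ((g ∘ φ) u) ((g ∘ φ) v),
          fun u v => Pm_symm α β γ ((g ∘ φ) u) ((g ∘ φ) v)⟩ e := by
    intro g
    have hmap : ∀ e ∈ H₁.edgeFinset,
        Sym2.lift ⟨fun u v => Pm α β γ ((g ∘ φ) u) ((g ∘ φ) v),
          fun u v => Pm_symm α β γ ((g ∘ φ) u) ((g ∘ φ) v)⟩ e = F g (Sym2.map φ e) := by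
      intro e _
      induction e using Sym2.ind with
      | _ u v => rfl
    rw [Finset.prod_congr rfl hmap]
    have himg : (∏ e ∈ H₁.edgeFinset, F g (Sym2.map φ e)) =
        ∏ e' ∈ H₁.edgeFinset.image (Sym2.map φ), F g e' := by
      rw [Finset.prod_image]
      intro a ha b hb hab
      exact hinj (by simpa [SimpleGraph.mem_edgeFinset] using ha)
        (by simpa [SimpleGraph.mem_edgeFinset] using hb) hab
    rw [himg]
    have hsub : H₁.edgeFinset.image (Sym2.map φ) ⊆ H₂.edgeFinset := by
      intro e' he'
      rcases Finset.mem_image.mp he' with ⟨e, he, rfl⟩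
      rw [SimpleGraph.mem_edgeFinset] at he ⊢
      exact φ.map_mem_edgeSet he
    calc ∏ e ∈ H₂.edgeFinset, F g e
        = (∏ e ∈ H₂.edgeFinset \ H₁.edgeFinset.image (Sym2.map φ), F g e) *
          ∏ e ∈ H₁.edgeFinset.image (Sym2.map φ), F g e := (Finset.prod_sdiff hsub).symm
      _ ≤ 1 * ∏ e ∈ H₁.edgeFinset.image (Sym2.map φ), F g e := by
          apply mul_le_mul_of_nonneg_right
          · exact Finset.prod_le_one (fun i _ => (hFpos g i).le) (fun i _ => hFle1 g i)
          · exact Finset.prod_nonneg fun i _ => (hFpos g i).le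
      _ = _ := one_mul _
  -- Step 2: sum over g, using injectivity of g ↦ g ∘ φ
  have hcompinj : Function.Injective (fun g : V₂ → Bool => g ∘ φ) := by
    intro g₁ g₂ h
    funext v
    obtain ⟨u, rfl⟩ := hsurj v
    exact congrFun h u
  calc baseVal α β γ H₂
      ≤ ∑ g : V₂ → Bool, ∏ e ∈ H₁.edgeFinset,
          Sym2.lift ⟨fun u v => Pm α β γ ((g ∘ φ) u) ((g ∘ φ) v),
            fun u v => Pm_symm α β γ ((g ∘ φ) u) ((g ∘ φ) v)⟩ e :=
        Finset.sum_le_sum fun g _ => key g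
    _ = ∑ h ∈ Finset.univ.image (fun g : V₂ → Bool => g ∘ φ),
          ∏ e ∈ H₁.edgeFinset,
            Sym2.lift ⟨fun u v => Pm α β γ (h u) (h v),
              fun u v => Pm_symm α β γ (h u) (h v)⟩ e := by
        rw [Finset.sum_image fun a _ b _ h => hcompinj h]
    _ ≤ baseVal α β γ H₁ := by
        apply Finset.sum_le_sum_of_subset_of_nonneg (Finset.subset_univ _)
        intro h _ _
        apply Finset.prod_nonneg
        intro e _
        induction e using Sym2.ind with
        | _ u v => exact (Pm_pos hα0 hβ0 hγ0 _ _).le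
end

section
/- Let 0<α,β,γ<1 satisfy (α+β)^k + (β+γ)^k > 1. Then for every integer ℓ with 0<ℓ<k, ((α+β)^k+(β+γ)^k)² > (α+β)^{k+ℓ}+(β+γ)^{k+ℓ}. -/
/-- If `(α+β)^k + (β+γ)^k > 1` then for every `0 < ℓ < k`,
`((α+β)^k + (β+γ)^k)² > (α+β)^{k+ℓ} + (β+γ)^{k+ℓ}`. -/
theorem star_second_moment_ineq (α β γ : ℝ) (hα0 : 0 < α) (hα1 : α < 1)
    (hβ0 : 0 < β) (hβ1 : β < 1) (hγ0 : 0 < γ) (hγ1 : γ < 1)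
    (k ℓ : ℕ) (h : 1 < (α + β) ^ k + (β + γ) ^ k)
    (hℓ0 : 0 < ℓ) (hℓk : ℓ < k) :
    (α + β) ^ (k + ℓ) + (β + γ) ^ (k + ℓ)
      < ((α + β) ^ k + (β + γ) ^ k) ^ 2 := by
  set x := α + β with hx
  set y := β + γ with hy
  have hx0 : 0 < x := by positivity
  have hy0 : 0 < y := by positivity
  have ha : (0:ℝ) < x ^ k := by positivity
  have hb : (0:ℝ) < y ^ k := by positivity
  have key : ∀ z : ℝ, 0 < z → z ^ ℓ < x ^ k + y ^ k ∨ z ^ ℓ ≤ z ^ k := by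
    intro z hz
    rcases le_or_gt 1 z with h1 | h1
    · exact Or.inr (pow_le_pow_right₀ h1 hℓk.le)
    · exact Or.inl (lt_of_le_of_lt (pow_le_one₀ hz.le h1.le) h)
  have hxl : x ^ ℓ < x ^ k + y ^ k := by
    rcases key x hx0 with h' | h'
    · exact h'
    · linarith
  have hyl : y ^ ℓ < x ^ k + y ^ k := by
    rcases key y hy0 with h' | h'
    · exact h'
    · linarith
  have e1 : x ^ (k + ℓ) = x ^ k * x ^ ℓ := pow_add x k ℓ
  have e2 : y ^ (k + ℓ) = y ^ k * y ^ ℓ := pow_add y k ℓ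
  have h1 : x ^ k * x ^ ℓ < x ^ k * (x ^ k + y ^ k) := by
    exact (mul_lt_mul_iff_right₀ ha).mpr hxl
  have h2 : y ^ k * y ^ ℓ < y ^ k * (x ^ k + y ^ k) := by
    exact (mul_lt_mul_iff_right₀ hb).mpr hyl
  nlinarith [h1, h2]
end

section
/- Let 0<α,β<1 with α+β>1, α≥β (or k even), and k≥3. Then for all 0<ℓ<k, ½(α+β)^{2k−ℓ}[1 + ((α−β)/(α+β))^{2k−2ℓ} + 2((α−β)/(α+β))^k] < ((α+β)^k + (α−β)^k)². -/
/-- For `0<α,β<1` with `α+β>1` and (`α ≥ β` or `k` even), `k ≥ 3`, `0<ℓ<k`: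
`½(α+β)^{2k−ℓ}[1 + ((α−β)/(α+β))^{2k−2ℓ} + 2((α−β)/(α+β))^k]
  < ((α+β)^k + (α−β)^k)²`. -/
theorem cycle_overlap_ineq (α β : ℝ) (hα0 : 0 < α) (hα1 : α < 1)
    (hβ0 : 0 < β) (hβ1 : β < 1) (hαβ : 1 < α + β) (k ℓ : ℕ)
    (hcase : β ≤ α ∨ Even k) (hk : 3 ≤ k) (hℓ0 : 0 < ℓ) (hℓk : ℓ < k) :
    (1 / 2) * (α + β) ^ (2 * k - ℓ)
        * (1 + ((α - β) / (α + β)) ^ (2 * k - 2 * ℓ)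
            + 2 * ((α - β) / (α + β)) ^ k)
      < ((α + β) ^ k + (α - β) ^ k) ^ 2 := by
  have hs : (0:ℝ) < α + β := by linarith
  set r : ℝ := (α - β) / (α + β) with hr
  have hd : α - β = r * (α + β) := by rw [hr, div_mul_cancel₀ _ hs.ne']
  have hrk : 0 ≤ r ^ k := by
    rcases hcase with h | h
    · apply pow_nonneg
      apply div_nonneg (by linarith) hs.le
    · exact h.pow_nonneg r
  have hr_abs : |r| < 1 := by
    rw [hr, abs_div, abs_of_pos hs, div_lt_one hs, abs_lt]
    constructor <;> linarith
  have hle : r ^ (2 * k - 2 * ℓ) ≤ 1 := by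
    calc r ^ (2 * k - 2 * ℓ) ≤ |r ^ (2 * k - 2 * ℓ)| := le_abs_self _
      _ = |r| ^ (2 * k - 2 * ℓ) := abs_pow r _
      _ ≤ 1 := pow_le_one₀ (abs_nonneg r) hr_abs.le
  have heven : 0 ≤ r ^ (2 * k - 2 * ℓ) := by
    have h2 : 2 * k - 2 * ℓ = 2 * (k - ℓ) := by omega
    rw [h2, pow_mul]; positivity
  have hB : 0 < 1 + r ^ (2 * k - 2 * ℓ) + 2 * r ^ k := by linarith
  have hpow : (α + β) ^ (2 * k - ℓ) < (α + β) ^ (2 * k) := by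
    apply pow_lt_pow_right₀ hαβ; omega
  have hspos : 0 < (α + β) ^ (2 * k) := pow_pos hs _
  have hrhs : ((α + β) ^ k + (α - β) ^ k) ^ 2
      = (α + β) ^ (2 * k) * (1 + r ^ k) ^ 2 := by
    rw [hd, mul_pow, two_mul, pow_add]; ring
  rw [hrhs]
  calc (1 / 2) * (α + β) ^ (2 * k - ℓ) * (1 + r ^ (2 * k - 2 * ℓ) + 2 * r ^ k)
      < (1 / 2) * (α + β) ^ (2 * k) * (1 + r ^ (2 * k - 2 * ℓ) + 2 * r ^ k) := by
        apply mul_lt_mul_of_pos_right _ hB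
        linarith
    _ ≤ (α + β) ^ (2 * k) * (1 + r ^ k) ^ 2 := by
        have hkey : 1 + r ^ (2 * k - 2 * ℓ) + 2 * r ^ k ≤ 2 * (1 + r ^ k) ^ 2 := by
          nlinarith [sq_nonneg (r ^ k)]
        nlinarith [mul_le_mul_of_nonneg_left hkey hspos.le]
end
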